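/- Let G and H be gibonacci sequences and set e_G = G(0)² − G(1)² + G(0)·G(1). Then for all integers k and r: H(k+r−2)·G(k−1)·G(k+1)·G(k+2) + G(k−2)·H(k+r−1)·G(k+1)·G(k+2) + G(k−2)·G(k−1)·H(k+r+1)·G(k+2) + G(k−2)·G(k−1)·G(k+1)·H(k+r+2) = 4·H(k+r)·G(k)³ − 2·e_G·G(0)·(H(r+2) + H(r)) + 2·e_G·G(1)·(H(r+1) + H(r−1)). -/

import Mathlib

/-!
By the recurrences alone, the left side minus `4 H(k+r) G(k)³` equals `-2 e_{k-1} W_{k-1}`, where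
`e_n = G(n)² - G(n+1)² + G(n) G(n+1)` is the characteristic of `G` shifted by `n` and
`W_n = G(n) L(n+1) - G(n+1) L(n)` is the Casoratian of `G` against the Lucas companion
`L(n) = H(n+r-1) + H(n+r+1)` of `H`. Both `e_n` and `W_n` change sign under `n ↦ n + 1`, so their
product does not depend on `n`, and at `n = 0` it is the right side.
-/

def IsGibonacci (G : ℤ → ℝ) : Prop :=
  ∀ n : ℤ, G n = G (n - 1) + G (n - 2)

namespace IsGibonacci

variable {G H : ℤ → ℝ}

theorem add_two (hG : IsGibonacci G) (n : ℤ) : G (n + 2) = G (n + 1) + G n := by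
  have h := hG (n + 2)
  rwa [add_sub_cancel_right, show n + 2 - 1 = n + 1 by ring] at h

theorem add_one (hG : IsGibonacci G) (n : ℤ) : G (n + 1) = G n + G (n - 1) := by
  have h := hG (n + 1)
  rwa [add_sub_cancel_right, show n + 1 - 2 = n - 1 by ring] at h

theorem sub_two (hG : IsGibonacci G) (n : ℤ) : G (n - 2) = G n - G (n - 1) := by
  linarith [hG n]

theorem comp_add (hG : IsGibonacci G) (m : ℤ) : IsGibonacci (fun n => G (n + m)) := fun n => by
  simpa only [sub_add_eq_add_sub] using hG (n + m)

theorem add (hG : IsGibonacci G) (hH : IsGibonacci H) : IsGibonacci (G + H) := fun n => by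
  simp only [Pi.add_apply, hG n, hH n]
  ring

end IsGibonacci

def characteristic (G : ℤ → ℝ) (n : ℤ) : ℝ :=
  G n ^ 2 - G (n + 1) ^ 2 + G n * G (n + 1)

def casoratian (A B : ℤ → ℝ) (n : ℤ) : ℝ :=
  A n * B (n + 1) - A (n + 1) * B n

def lucasCompanion (H : ℤ → ℝ) (n : ℤ) : ℝ :=
  H (n - 1) + H (n + 1)

variable {G H A B : ℤ → ℝ}

theorem characteristic_add_one (hG : IsGibonacci G) (n : ℤ) :
    characteristic G (n + 1) = -characteristic G n := by
  simp only [characteristic, add_assoc, one_add_one_eq_two, hG.add_two]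
  ring

theorem casoratian_add_one (hA : IsGibonacci A) (hB : IsGibonacci B) (n : ℤ) :
    casoratian A B (n + 1) = -casoratian A B n := by
  simp only [casoratian, add_assoc, one_add_one_eq_two, hA.add_two, hB.add_two]
  ring

theorem characteristic_mul_casoratian_eq (hG : IsGibonacci G) (hA : IsGibonacci A)
    (hB : IsGibonacci B) (n : ℤ) :
    characteristic G n * casoratian A B n = characteristic G 0 * casoratian A B 0 := by
  have hper : Function.Periodic (fun n => characteristic G n * casoratian A B n) 1 := fun n => by
    simp only [characteristic_add_one hG, casoratian_add_one hA hB, neg_mul_neg]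
  simpa using hper.int_mul_eq n

theorem IsGibonacci.lucasCompanion (hH : IsGibonacci H) : IsGibonacci (lucasCompanion H) :=
  (hH.comp_add (-1)).add (hH.comp_add 1)

theorem gelinCesaro_sum_eq (hG : IsGibonacci G) (hH : IsGibonacci H) (n m : ℤ) :
    H (m - 2) * G (n - 1) * G (n + 1) * G (n + 2)
      + G (n - 2) * H (m - 1) * G (n + 1) * G (n + 2)
      + G (n - 2) * G (n - 1) * H (m + 1) * G (n + 2)
      + G (n - 2) * G (n - 1) * G (n + 1) * H (m + 2) =
    4 * H m * G n ^ 3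
      - 2 * (characteristic G (n - 1) *
        (G (n - 1) * lucasCompanion H m - G n * lucasCompanion H (m - 1))) := by
  simp only [characteristic, lucasCompanion, sub_add_cancel, sub_sub, one_add_one_eq_two,
    hG.add_two, hG.add_one, hG.sub_two, hH.add_two, hH.add_one, hH.sub_two]
  ring

/-- a generalization of the Gelin–Cesàro identity to two
gibonacci sequences. -/
theorem statement19 (G H : ℤ → ℝ)
    (hG : ∀ n : ℤ, G n = G (n - 1) + G (n - 2))
    (hH : ∀ n : ℤ, H n = H (n - 1) + H (n - 2))
    (eG : ℝ) (heG : eG = G 0 ^ 2 - G 1 ^ 2 + G 0 * G 1)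
    (k r : ℤ) :
    H (k + r - 2) * G (k - 1) * G (k + 1) * G (k + 2)
      + G (k - 2) * H (k + r - 1) * G (k + 1) * G (k + 2)
      + G (k - 2) * G (k - 1) * H (k + r + 1) * G (k + 2)
      + G (k - 2) * G (k - 1) * G (k + 1) * H (k + r + 2) =
    4 * H (k + r) * G k ^ 3 - 2 * eG * G 0 * (H (r + 2) + H r)
      + 2 * eG * G 1 * (H (r + 1) + H (r - 1)) := by
  have hL : IsGibonacci (fun n => lucasCompanion H (n + r)) :=
    (IsGibonacci.lucasCompanion hH).comp_add r
  have hinv : characteristic G (k - 1) *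
      (G (k - 1) * lucasCompanion H (k + r) - G k * lucasCompanion H (k + r - 1)) =
      eG * (G 0 * lucasCompanion H (r + 1) - G 1 * lucasCompanion H r) := by
    have h := characteristic_mul_casoratian_eq hG hG hL (k - 1)
    simp only [casoratian, sub_add_cancel, zero_add, sub_add_eq_add_sub, add_comm 1 r] at h
    rwa [heG]
  rw [gelinCesaro_sum_eq hG hH k (k + r), hinv]
  simp only [lucasCompanion, add_sub_cancel_right, add_assoc, one_add_one_eq_two]
  ring
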